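/- arXiv:1610.07093 — 2 statements merged into one kernel-verified Lean document; each statement's English description precedes it below -/
import Mathlib

section
/- Let d > 1 be an odd integer and n ≥ 2. Let V = Z_d^n × Z_d^n with symplectic form [·,·]. Any function λ : V → Z_d satisfying λ(u+v) = λ(u) + λ(v) for all u, v with [u,v] = 0 is a group homomorphism (i.e., is additive on all of V). -/
open Complex Matrix BigOperators Finset

noncomputable section

/-- ω = e^{2πi/d} -/
def omeg (d : ℕ) : ℂ := Complex.exp (2 * Real.pi * Complex.I / d)

/-- ω raised to a `ZMod d` exponent. -/
def wpow (d : ℕ) [NeZero d] (x : ZMod d) : ℂ := omeg d ^ x.val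

/-- standard inner product on `(ZMod d)^n` -/
def ip {d n : ℕ} (a b : Fin n → ZMod d) : ZMod d := ∑ i, a i * b i

/-- the phase space `V = Z_d^n × Z_d^n` -/
abbrev PS (d n : ℕ) := (Fin n → ZMod d) × (Fin n → ZMod d)

/-- symplectic form `[u,v] = (u_Z|v_X) − (u_X|v_Z)` -/
def symp {d n : ℕ} (u v : PS d n) : ZMod d := ip u.1 v.2 - ip u.2 v.1

/-- `Z^a = Z^{a_1} ⊗ ⋯ ⊗ Z^{a_n}` : diagonal matrix with entries `ω^{(a|k)}` -/
def Zop (d n : ℕ) [NeZero d] (a : Fin n → ZMod d) :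
    Matrix (Fin n → ZMod d) (Fin n → ZMod d) ℂ :=
  Matrix.of fun k l => if k = l then wpow d (ip a k) else 0

/-- `X^a = X^{a_1} ⊗ ⋯ ⊗ X^{a_n}` : shift matrix `|l⟩ ↦ |l + a⟩` -/
def Xop (d n : ℕ) [NeZero d] (a : Fin n → ZMod d) :
    Matrix (Fin n → ZMod d) (Fin n → ZMod d) ℂ :=
  Matrix.of fun k l => if k = l + a then 1 else 0

/-- Heisenberg–Weyl operator `T_u = ω^{-(u_Z|u_X)/2} Z^{u_Z} X^{u_X}` -/
def HW (d n : ℕ) [NeZero d] (u : PS d n) :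
    Matrix (Fin n → ZMod d) (Fin n → ZMod d) ℂ :=
  wpow d (-((2 : ZMod d)⁻¹ * ip u.1 u.2)) • (Zop d n u.1 * Xop d n u.2)

/-- phase-point operator `A_u = d^{-n} Σ_v ω^{[u,v]} T_v` -/
def phasePoint (d n : ℕ) [NeZero d] (u : PS d n) :
    Matrix (Fin n → ZMod d) (Fin n → ZMod d) ℂ :=
  ((d : ℂ) ^ n)⁻¹ • ∑ v : PS d n, wpow d (symp u v) • HW d n v

/-- spectral projector `Π_u^s = (1/d) Σ_k ω^{-ks} T_u^k` -/
def specProj (d n : ℕ) [NeZero d] (a : PS d n) (s : ZMod d) :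
    Matrix (Fin n → ZMod d) (Fin n → ZMod d) ℂ :=
  (d : ℂ)⁻¹ • ∑ k : ZMod d, wpow d (-(k * s)) • (HW d n a) ^ (k.val)

/-!
If `x, y` are orthogonal to a pair `w, w'` with `[w, w'] = -[x, y]`, then the two rectangles of
orthogonal pairs `(x, y, w, w')` and `(w, w', -x, -y)` give `2 λ(x + y) = 2 (λ x + λ y)`, and 2 is
invertible as `d` is odd. With `n ≥ 2` such a pair exists for vectors supported on one mode (take
it on another mode), so `λ` is additive on each mode; and vectors on distinct modes are orthogonal,
so `λ` is the sum of its restrictions to the modes.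
-/

def IsOrthAdditive {R M N A : Type*} [CommRing R] [AddCommGroup M] [Module R M]
    [AddCommGroup N] [Module R N] [AddCommGroup A] (B : M →ₗ[R] M →ₗ[R] N) (f : M → A) : Prop :=
  ∀ u v, B u v = 0 → f (u + v) = f u + f v

namespace IsOrthAdditive

variable {R M N A : Type*} [CommRing R] [AddCommGroup M] [Module R M]
  [AddCommGroup N] [Module R N] [AddCommGroup A] {B : M →ₗ[R] M →ₗ[R] N} {f : M → A}

theorem map_zero (hf : IsOrthAdditive B f) : f 0 = 0 := by
  simpa using hf 0 0 (by simp)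

theorem map_neg (hf : IsOrthAdditive B f) (hB : B.IsAlt) (x : M) : f (-x) = -f x := by
  have h := hf x (-x) (by simp [hB.self_eq_zero])
  rw [add_neg_cancel, hf.map_zero] at h
  exact (neg_eq_of_add_eq_zero_right h.symm).symm

theorem map_sum (hf : IsOrthAdditive B f) {ι : Type*} (s : Finset ι) (g : ι → M)
    (hg : (s : Set ι).Pairwise fun i j => B (g i) (g j) = 0) :
    f (∑ i ∈ s, g i) = ∑ i ∈ s, f (g i) := by
  classical
  induction s using Finset.induction_on with
  | empty => simp [hf.map_zero]
  | insert a t ha ih =>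
    have horth : B (g a) (∑ i ∈ t, g i) = 0 := by
      rw [_root_.map_sum]
      exact Finset.sum_eq_zero fun i hi =>
        hg (by simp) (by simp [hi]) (by rintro rfl; exact ha hi)
    rw [Finset.sum_insert ha, Finset.sum_insert ha, hf _ _ horth,
      ih (hg.mono (by simp))]

/-- The rectangle identity: both `(x + y, w + w')` and `(x + w, y + w')` are orthogonal pairs. -/
theorem map_add_add_map_add (hf : IsOrthAdditive B f) (hB : B.IsAlt) {x y w w' : M}
    (hxw : B x w = 0) (hxw' : B x w' = 0) (hyw : B y w = 0) (hyw' : B y w' = 0)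
    (hs : B x y + B w w' = 0) :
    f (x + y) + f (w + w') = f x + f y + f w + f w' := by
  have hwy : B w y = 0 := hB.eq_iff.mp hyw
  have h₁ := hf (x + y) (w + w') (by simp [hxw, hxw', hyw, hyw'])
  have h₂ := hf (x + w) (y + w') (by simpa [hxw', hwy] using hs)
  rw [add_add_add_comm x w, h₁, hf x w hxw, hf y w' hyw'] at h₂
  rw [h₂]
  abel

theorem two_nsmul_map_add (hf : IsOrthAdditive B f) (hB : B.IsAlt) {x y w w' : M}
    (hxw : B x w = 0) (hxw' : B x w' = 0) (hyw : B y w = 0) (hyw' : B y w' = 0)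
    (hww' : B w w' = -B x y) :
    2 • f (x + y) = 2 • (f x + f y) := by
  have h₁ := hf.map_add_add_map_add hB hxw hxw' hyw hyw' (by rw [hww', add_neg_cancel])
  have h₂ := hf.map_add_add_map_add hB (x := w) (y := w') (w := -x) (w' := -y)
    (by simp [hB.eq_iff.mp hxw]) (by simp [hB.eq_iff.mp hyw])
    (by simp [hB.eq_iff.mp hxw']) (by simp [hB.eq_iff.mp hyw']) (by simp [hww'])
  rw [← neg_add, hf.map_neg hB, hf.map_neg hB, hf.map_neg hB] at h₂
  rw [two_nsmul, two_nsmul]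
  linear_combination (norm := abel) h₁ - h₂

end IsOrthAdditive

section PhaseSpace

variable {d n : ℕ}

theorem ip_eq_dotProduct (a b : Fin n → ZMod d) : ip a b = a ⬝ᵥ b := rfl

def sympForm (d n : ℕ) : PS d n →ₗ[ZMod d] PS d n →ₗ[ZMod d] ZMod d :=
  LinearMap.mk₂ (ZMod d) symp
    (fun u v w => by simp only [symp, ip_eq_dotProduct, Prod.fst_add, Prod.snd_add,
      add_dotProduct]; ring)
    (fun c u v => by simp only [symp, ip_eq_dotProduct, Prod.smul_fst, Prod.smul_snd,
      smul_dotProduct, smul_eq_mul]; ring)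
    (fun u v w => by simp only [symp, ip_eq_dotProduct, Prod.fst_add, Prod.snd_add,
      dotProduct_add]; ring)
    (fun c u v => by simp only [symp, ip_eq_dotProduct, Prod.smul_fst, Prod.smul_snd,
      dotProduct_smul, smul_eq_mul]; ring)

theorem sympForm_apply (u v : PS d n) : sympForm d n u v = symp u v := rfl

theorem sympForm_isAlt : (sympForm d n).IsAlt := fun u => by
  rw [sympForm_apply, symp, ip_eq_dotProduct, ip_eq_dotProduct, dotProduct_comm, sub_self]

def modeVec (i : Fin n) (p : ZMod d × ZMod d) : PS d n :=
  (Pi.single i p.1, Pi.single i p.2)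

theorem modeVec_add (i : Fin n) (p q : ZMod d × ZMod d) :
    modeVec i (p + q) = modeVec i p + modeVec i q := by
  simp [modeVec, Pi.single_add]

theorem sum_modeVec (u : PS d n) : ∑ i, modeVec i (u.1 i, u.2 i) = u := by
  ext1 <;> simp [modeVec, Prod.fst_sum, Prod.snd_sum, Finset.univ_sum_single]

theorem symp_modeVec_self (i : Fin n) (p q : ZMod d × ZMod d) :
    symp (modeVec i p) (modeVec i q) = p.1 * q.2 - p.2 * q.1 := by
  simp [symp, modeVec, ip_eq_dotProduct]

theorem symp_modeVec_of_ne {i j : Fin n} (hij : i ≠ j) (p q : ZMod d × ZMod d) :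
    symp (modeVec i p) (modeVec j q) = 0 := by
  simp [symp, modeVec, ip_eq_dotProduct, Pi.single_eq_of_ne' hij]

theorem IsOrthAdditive.map_eq_sum_modeVec {A : Type*} [AddCommGroup A] {f : PS d n → A}
    (hf : IsOrthAdditive (sympForm d n) f) (u : PS d n) :
    f u = ∑ i, f (modeVec i (u.1 i, u.2 i)) := by
  conv_lhs => rw [← sum_modeVec u]
  exact hf.map_sum _ _ fun i _ j _ hij => symp_modeVec_of_ne hij _ _

theorem IsOrthAdditive.map_add_modeVec {f : PS d n → ZMod d}
    (hf : IsOrthAdditive (sympForm d n) f) (hd : Odd d) {i j : Fin n} (hij : i ≠ j)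
    (p q : ZMod d × ZMod d) :
    f (modeVec i p + modeVec i q) = f (modeVec i p) + f (modeVec i q) := by
  have h2 : IsUnit (2 : ZMod d) := by
    exact_mod_cast (ZMod.isUnit_iff_coprime 2 d).mpr (Nat.coprime_two_left.mpr hd)
  have hxw := symp_modeVec_of_ne hij p (1, 0)
  have hxw' := symp_modeVec_of_ne hij p (0, -symp (modeVec i p) (modeVec i q))
  have hyw := symp_modeVec_of_ne hij q (1, 0)
  have hyw' := symp_modeVec_of_ne hij q (0, -symp (modeVec i p) (modeVec i q))
  have h := hf.two_nsmul_map_add sympForm_isAlt hxw hxw' hyw hyw'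
    (by simp only [sympForm_apply, symp_modeVec_self]; ring)
  simp only [nsmul_eq_mul, Nat.cast_ofNat] at h
  exact h2.mul_left_cancel h

end PhaseSpace

theorem stmt7_general (d n : ℕ) (hd : Odd d) (hn : 2 ≤ n)
    (lam : PS d n → ZMod d)
    (hadd : ∀ u v : PS d n, symp u v = 0 → lam (u + v) = lam u + lam v) :
    ∀ u v : PS d n, lam (u + v) = lam u + lam v := by
  have hf : IsOrthAdditive (sympForm d n) lam := hadd
  have : Nontrivial (Fin n) := Fin.nontrivial_iff_two_le.mpr hn
  intro u v
  calc lam (u + v) = ∑ i, lam (modeVec i (u.1 i + v.1 i, u.2 i + v.2 i)) :=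
        hf.map_eq_sum_modeVec (u + v)
    _ = ∑ i, (lam (modeVec i (u.1 i, u.2 i)) + lam (modeVec i (v.1 i, v.2 i))) := by
        refine Finset.sum_congr rfl fun i _ => ?_
        obtain ⟨j, hj⟩ := exists_ne i
        rw [← hf.map_add_modeVec hd hj.symm, ← modeVec_add]
        rfl
    _ = lam u + lam v := by
        rw [Finset.sum_add_distrib, ← hf.map_eq_sum_modeVec, ← hf.map_eq_sum_modeVec]

theorem stmt7 (d n : ℕ) [NeZero d] (hd : Odd d) (hd1 : 1 < d) (hn : 2 ≤ n)
    (lam : PS d n → ZMod d)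
    (hadd : ∀ u v : PS d n, symp u v = 0 → lam (u + v) = lam u + lam v) :
    ∀ u v : PS d n, lam (u + v) = lam u + lam v :=
  stmt7_general d n hd hn lam hadd
end
end

section
/- Let d > 1 be odd and n ≥ 2. Suppose ρ is a density matrix on (C^d)^{⊗n} admitting a set of non-contextual value assignments: a finite set S, a probability distribution q on S, and maps λ_ν : V → U_d (d-th roots of unity) each additive on symplectically orthogonal pairs, with Tr(T_u ρ) = Σ_ν λ_ν(u) q(ν) for all u ∈ V. Then the Wigner function W_ρ(u) = d^{-n} Tr(A_u ρ) is non-negative for every u ∈ V. -/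
/-! The key point is that each value assignment `λ` is a genuine character of `V`. Orthogonal
pairs let one split `λ(x, y)` into `λ(x, 0) λ(0, y)` coordinate by coordinate. For a single
coordinate, `u = (a e_i, b e_i)`, a second coordinate `j` provides `w = (ab e_j, -e_j)`, which
commutes with `u` and is such that both `u + w` and `w - u` split; this forces the splitting
defect of `u` to square to `1`, hence to be `1` because `d` is odd. Then `W_ρ(u)` is, up to a
positive factor, a convex combination of the character sums `∑_v ω^{[u,v]} λ_ν(v)`, each of
which is `|V|` or `0`. -/

open Complex Matrix BigOperators Finset
open scoped ComplexOrder

noncomputable section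

section Symplectic

variable {d n : ℕ}

lemma symp_eq (u v : PS d n) : symp u v = u.1 ⬝ᵥ v.2 - u.2 ⬝ᵥ v.1 := rfl

lemma symp_add_right (u v w : PS d n) : symp u (v + w) = symp u v + symp u w := by
  simp only [symp_eq, Prod.fst_add, Prod.snd_add, dotProduct_add]
  ring

lemma symp_sum_right {ι : Type*} (u : PS d n) (s : Finset ι) (f : ι → PS d n) :
    symp u (∑ i ∈ s, f i) = ∑ i ∈ s, symp u (f i) := by
  simp only [symp_eq, Prod.fst_sum, Prod.snd_sum, dotProduct_sum, Finset.sum_sub_distrib]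

lemma symp_neg_self (u : PS d n) : symp u (-u) = 0 := by
  simp [symp_eq, dotProduct_comm u.2 u.1]

lemma symp_single_of_ne {i j : Fin n} (hij : i ≠ j) (a b a' b' : ZMod d) :
    symp (Pi.single i a, Pi.single i b) (Pi.single j a', Pi.single j b') = 0 := by
  simp [symp_eq, hij]

lemma sum_single_pair (u : PS d n) :
    ∑ i, ((Pi.single i (u.1 i), Pi.single i (u.2 i)) : PS d n) = u := by
  ext1 <;> simp only [Prod.fst_sum, Prod.snd_sum, Finset.univ_sum_single]

end Symplectic

lemma eq_of_sq_eq_of_pow_eq_one {M : Type*} [CommMonoid M] {a b : M} {d : ℕ} (hd : Odd d)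
    (ha : a ^ d = 1) (hb : b ^ d = 1) (hab : a ^ 2 = b ^ 2) : a = b := by
  obtain ⟨k, rfl⟩ := hd
  have hunit : IsUnit ((b ^ 2) ^ k) := ((IsUnit.of_pow_eq_one hb (by omega)).pow 2).pow k
  refine hunit.mul_left_cancel ?_
  rw [← pow_mul, ← pow_succ, hb, pow_mul, ← hab, ← pow_mul, ← pow_succ, ha]

def MulOnSympOrthogonal {d n : ℕ} {M : Type*} [Mul M] (L : PS d n → M) : Prop :=
  ∀ u v, symp u v = 0 → L (u + v) = L u * L v

namespace MulOnSympOrthogonal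

variable {d n : ℕ} {M : Type*} [CommMonoid M] {L : PS d n → M}

lemma map_zero (hL : MulOnSympOrthogonal L) (hunit : IsUnit (L 0)) : L 0 = 1 := by
  have h := hL 0 0 (by simp [symp_eq])
  rw [add_zero] at h
  exact hunit.mul_left_cancel (h.symm.trans (mul_one _).symm)

lemma map_mul_map_neg (hL : MulOnSympOrthogonal L) (hunit : IsUnit (L 0)) (u : PS d n) :
    L u * L (-u) = 1 := by
  rw [← hL u (-u) (symp_neg_self u), add_neg_cancel, hL.map_zero hunit]

lemma map_fst_add (hL : MulOnSympOrthogonal L) (x x' : Fin n → ZMod d) :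
    L (x + x', 0) = L (x, 0) * L (x', 0) := by
  simpa using hL (x, 0) (x', 0) (by simp [symp_eq])

lemma map_snd_add (hL : MulOnSympOrthogonal L) (y y' : Fin n → ZMod d) :
    L (0, y + y') = L (0, y) * L (0, y') := by
  simpa using hL (0, y) (0, y') (by simp [symp_eq])

lemma map_mk_of_dotProduct_eq_zero (hL : MulOnSympOrthogonal L) {x y : Fin n → ZMod d}
    (hxy : x ⬝ᵥ y = 0) : L (x, y) = L (x, 0) * L (0, y) := by
  simpa using hL (x, 0) (0, y) (by simp [symp_eq, hxy])

lemma map_sum_of_pairwise (hL : MulOnSympOrthogonal L) (hunit : IsUnit (L 0))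
    {ι : Type*} [DecidableEq ι] (s : Finset ι) (f : ι → PS d n)
    (hf : ∀ i ∈ s, ∀ j ∈ s, i ≠ j → symp (f i) (f j) = 0) :
    L (∑ i ∈ s, f i) = ∏ i ∈ s, L (f i) := by
  induction s using Finset.induction_on with
  | empty => simpa using hL.map_zero hunit
  | insert a s ha ih =>
    have horth : symp (f a) (∑ i ∈ s, f i) = 0 := by
      rw [symp_sum_right]
      exact Finset.sum_eq_zero fun i hi =>
        hf a (s.mem_insert_self a) i (s.mem_insert_of_mem hi) (ne_of_mem_of_not_mem hi ha).symm
    rw [Finset.sum_insert ha, Finset.prod_insert ha, hL _ _ horth,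
      ih fun i hi j hj => hf i (s.mem_insert_of_mem hi) j (s.mem_insert_of_mem hj)]

/-- If `w = (α, -β)` commutes with `u = (x, y)` and both `u + w` and `w - u` split, then the
splitting defect of `u` squares to `1`. -/
lemma sq_map_mk (hL : MulOnSympOrthogonal L) (hunit : ∀ u, IsUnit (L u))
    {x y α β : Fin n → ZMod d} (hxβ : x ⬝ᵥ β = 0) (hyα : y ⬝ᵥ α = 0)
    (hαβ : α ⬝ᵥ β = x ⬝ᵥ y) :
    L (x, y) ^ 2 = (L (x, 0) * L (0, y)) ^ 2 := by
  have hsum : L (x, y) * L (α, -β) = L (x, 0) * L (α, 0) * (L (0, y) * L (0, -β)) := by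
    rw [← hL _ _ (by simp [symp_eq, hxβ, hyα]), Prod.mk_add_mk,
      hL.map_mk_of_dotProduct_eq_zero, hL.map_fst_add, hL.map_snd_add]
    simp only [add_dotProduct, dotProduct_add, dotProduct_neg, hxβ, hαβ, dotProduct_comm α y,
      hyα]
    ring
  have hdiff : L (α, -β) * L (-x, -y) = L (α, 0) * L (-x, 0) * (L (0, -β) * L (0, -y)) := by
    rw [← hL _ _ (by simp [symp_eq, dotProduct_comm β x, hxβ, dotProduct_comm α y, hyα]),
      Prod.mk_add_mk, hL.map_mk_of_dotProduct_eq_zero, hL.map_fst_add, hL.map_snd_add]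
    simp only [add_dotProduct, dotProduct_add, dotProduct_neg, neg_dotProduct, hxβ, hαβ,
      dotProduct_comm α y, hyα]
    ring
  have hinv (v : PS d n) : L v * L (-v) = 1 := hL.map_mul_map_neg (hunit 0) v
  have hu := hinv (x, y)
  have hx := hinv (x, 0)
  have hy := hinv (0, y)
  simp only [Prod.neg_mk, neg_zero] at hu hx hy
  refine ((hunit (α, 0)).mul (hunit (0, -β))).mul_right_cancel ?_
  calc L (x, y) ^ 2 * (L (α, 0) * L (0, -β))
      = L (x, y) * L (x, y) * (L (α, 0) * L (0, -β))
          * ((L (x, 0) * L (-x, 0)) * (L (0, y) * L (0, -y))) := by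
        rw [hx, hy, mul_one, mul_one, sq]
    _ = L (x, y) * L (x, y) * (L (α, 0) * L (-x, 0) * (L (0, -β) * L (0, -y)))
          * (L (x, 0) * L (0, y)) := by ac_rfl
    _ = L (x, y) * L (α, -β) * (L (x, y) * L (-x, -y)) * (L (x, 0) * L (0, y)) := by
        rw [← hdiff]; ac_rfl
    _ = (L (x, 0) * L (0, y)) ^ 2 * (L (α, 0) * L (0, -β)) := by
        rw [hsum, hu, sq]; ac_rfl

lemma map_single_mk (hL : MulOnSympOrthogonal L) (hroot : ∀ u, L u ^ d = 1) (hd : Odd d)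
    {i j : Fin n} (hij : i ≠ j) (a b : ZMod d) :
    L (Pi.single i a, Pi.single i b) = L (Pi.single i a, 0) * L (0, Pi.single i b) := by
  refine eq_of_sq_eq_of_pow_eq_one hd (hroot _) ?_ ?_
  · rw [mul_pow, hroot, hroot, one_mul]
  · refine hL.sq_map_mk (fun u => .of_pow_eq_one (hroot u) hd.pos.ne') (α := Pi.single j (a * b))
      (β := Pi.single j 1) ?_ ?_ ?_ <;> simp [hij.symm]

lemma map_mk (hL : MulOnSympOrthogonal L) (hroot : ∀ u, L u ^ d = 1) (hd : Odd d)
    [Nontrivial (Fin n)] (x y : Fin n → ZMod d) : L (x, y) = L (x, 0) * L (0, y) := by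
  have hunit : IsUnit (L 0) := .of_pow_eq_one (hroot 0) hd.pos.ne'
  have hsplit (u : PS d n) : L u = ∏ i, L (Pi.single i (u.1 i), Pi.single i (u.2 i)) := by
    conv_lhs => rw [← sum_single_pair u]
    exact hL.map_sum_of_pairwise hunit _ _ fun i _ j _ hij => symp_single_of_ne hij _ _ _ _
  rw [hsplit, hsplit (x, 0), hsplit (0, y), ← Finset.prod_mul_distrib]
  refine Finset.prod_congr rfl fun i _ => ?_
  obtain ⟨j, hij⟩ := exists_ne i
  simpa using hL.map_single_mk hroot hd hij.symm (x i) (y i)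

lemma map_add (hL : MulOnSympOrthogonal L) (hroot : ∀ u, L u ^ d = 1) (hd : Odd d)
    [Nontrivial (Fin n)] (u v : PS d n) : L (u + v) = L u * L v := by
  obtain ⟨x, y⟩ := u
  obtain ⟨x', y'⟩ := v
  rw [Prod.mk_add_mk, hL.map_mk hroot hd, hL.map_mk hroot hd x, hL.map_mk hroot hd x',
    hL.map_fst_add, hL.map_snd_add]
  ac_rfl

def toAddChar (hL : MulOnSympOrthogonal L) (hroot : ∀ u, L u ^ d = 1) (hd : Odd d)
    [Nontrivial (Fin n)] : AddChar (PS d n) M where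
  toFun := L
  map_zero_eq_one' := hL.map_zero (.of_pow_eq_one (hroot 0) hd.pos.ne')
  map_add_eq_mul' := hL.map_add hroot hd

end MulOnSympOrthogonal

lemma AddChar.sum_nonneg {A R : Type*} [AddGroup A] [Fintype A] [CommSemiring R] [IsDomain R]
    [PartialOrder R] [IsOrderedRing R] (ψ : AddChar A R) : 0 ≤ ∑ a, ψ a := by
  classical
  rw [AddChar.sum_eq_ite]
  split_ifs <;> simp

section Phases

variable {d n : ℕ} [NeZero d]

lemma omeg_pow_self : omeg d ^ d = 1 :=
  (Complex.isPrimitiveRoot_exp d (NeZero.ne d)).pow_eq_one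

lemma wpow_add (x y : ZMod d) : wpow d (x + y) = wpow d x * wpow d y := by
  rw [wpow, wpow, wpow, ZMod.val_add, ← pow_eq_pow_mod _ omeg_pow_self, pow_add]

def sympChar (u : PS d n) : AddChar (PS d n) ℂ where
  toFun v := wpow d (symp u v)
  map_zero_eq_one' := by simp [symp_eq, wpow]
  map_add_eq_mul' v w := by rw [symp_add_right, wpow_add]

lemma trace_phasePoint_mul (u : PS d n) (ρ : Matrix (Fin n → ZMod d) (Fin n → ZMod d) ℂ) :
    (phasePoint d n u * ρ).trace =
      ((d : ℂ) ^ n)⁻¹ * ∑ v, wpow d (symp u v) * (HW d n v * ρ).trace := by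
  simp only [phasePoint, smul_mul_assoc, Finset.sum_mul, trace_smul, trace_sum, smul_eq_mul]

end Phases

theorem stmt16_general (d n : ℕ) [NeZero d] (hd : Odd d) (hn : 2 ≤ n)
    (ρ : Matrix (Fin n → ZMod d) (Fin n → ZMod d) ℂ)
    (S : Type*) [Fintype S] (q : S → ℝ)
    (hq : ∀ ν, 0 ≤ q ν)
    (lam : S → PS d n → ℂ)
    (hroot : ∀ ν u, (lam ν u) ^ d = 1)
    (hadd : ∀ ν (u v : PS d n), symp u v = 0 → lam ν (u + v) = lam ν u * lam ν v)
    (hpred : ∀ u : PS d n, (HW d n u * ρ).trace = ∑ ν, lam ν u * (q ν : ℂ)) :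
    ∀ u : PS d n, ∃ r : ℝ, 0 ≤ r ∧
      ((d : ℂ) ^ n)⁻¹ * (phasePoint d n u * ρ).trace = (r : ℂ) := by
  intro u
  have : Nontrivial (Fin n) := Fin.nontrivial_iff_two_le.2 hn
  let χ (ν : S) : AddChar (PS d n) ℂ :=
    sympChar u * MulOnSympOrthogonal.toAddChar (hadd ν) (hroot ν) hd
  have hW : ((d : ℂ) ^ n)⁻¹ * (phasePoint d n u * ρ).trace =
      ((((d : ℝ) ^ n)⁻¹ ^ 2 : ℝ) : ℂ) * ∑ ν, (q ν : ℂ) * ∑ v, χ ν v := by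
    have hχ (ν : S) (v : PS d n) : χ ν v = wpow d (symp u v) * lam ν v := rfl
    simp only [trace_phasePoint_mul, hpred, Finset.mul_sum, hχ]
    rw [Finset.sum_comm]
    refine Finset.sum_congr rfl fun ν _ => Finset.sum_congr rfl fun v _ => ?_
    push_cast
    ring
  have hW_nonneg :
      (0 : ℂ) ≤ ((((d : ℝ) ^ n)⁻¹ ^ 2 : ℝ) : ℂ) * ∑ ν, (q ν : ℂ) * ∑ v, χ ν v :=
    mul_nonneg (Complex.zero_le_real.2 (by positivity))
    (Finset.sum_nonneg fun ν _ => mul_nonneg (Complex.zero_le_real.2 (hq ν)) (χ ν).sum_nonneg)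
  obtain ⟨r, hr, hr_eq⟩ := RCLike.nonneg_iff_exists_ofReal.1 hW_nonneg
  exact ⟨r, hr, hW.trans hr_eq.symm⟩

theorem stmt16 (d n : ℕ) [NeZero d] (hd : Odd d) (hd1 : 1 < d) (hn : 2 ≤ n)
    (ρ : Matrix (Fin n → ZMod d) (Fin n → ZMod d) ℂ)
    (hρ : ρ.PosSemidef) (htr : ρ.trace = 1)
    (S : Type*) [Fintype S] (q : S → ℝ)
    (hq : ∀ ν, 0 ≤ q ν) (hq1 : ∑ ν, q ν = 1)
    (lam : S → PS d n → ℂ)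
    (hroot : ∀ ν u, (lam ν u) ^ d = 1)
    (hadd : ∀ ν (u v : PS d n), symp u v = 0 → lam ν (u + v) = lam ν u * lam ν v)
    (hpred : ∀ u : PS d n, (HW d n u * ρ).trace = ∑ ν, lam ν u * (q ν : ℂ)) :
    ∀ u : PS d n, ∃ r : ℝ, 0 ≤ r ∧
      ((d : ℂ) ^ n)⁻¹ * (phasePoint d n u * ρ).trace = (r : ℂ) :=
  stmt16_general d n hd hn ρ S q hq lam hroot hadd hpred
end
end
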